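/- arXiv:1807.02330 — 3 statements merged into one kernel-verified Lean document; each statement's English description precedes it below -/
import Mathlib

section
/- Let c₁ ∈ (0,1] and let a : ℕ → ℝ be a sequence with a(n) ≥ 1 for all n ≥ 1, which is submultiplicative (a(n+m) ≤ a(n)·a(m) for all n,m ≥ 1) and c₁-supermultiplicative (a(n) ≥ c₁·a(j)·a(n−j) for all 1 ≤ j ≤ n−1). Let h = inf_{n≥1} (1/n)·log a(n). Then for all n ≥ 1: e^{n·h} ≤ a(n) ≤ (2/c₁)·e^{n·h}. -/
open Set Filter Topology

theorem stmt_0 (c₁ : ℝ) (hc₁ : 0 < c₁) (hc₁' : c₁ ≤ 1) (a : ℕ → ℝ)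
    (ha : ∀ n : ℕ, 1 ≤ n → 1 ≤ a n)
    (hsub : ∀ n m : ℕ, 1 ≤ n → 1 ≤ m → a (n + m) ≤ a n * a m)
    (hsup : ∀ n j : ℕ, 1 ≤ j → j < n → c₁ * a j * a (n - j) ≤ a n)
    (h : ℝ) (hh : h = sInf {x : ℝ | ∃ n : ℕ, 1 ≤ n ∧ x = Real.log (a n) / n}) :
    ∀ n : ℕ, 1 ≤ n →
      Real.exp (n * h) ≤ a n ∧ a n ≤ (2 / c₁) * Real.exp (n * h) := by
  set u : ℕ → ℝ := fun n => if n = 0 then 0 else Real.log (a n) with hu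
  have hapos : ∀ n : ℕ, 1 ≤ n → (0:ℝ) < a n := fun n hn => lt_of_lt_of_le one_pos (ha n hn)
  have hsubadd : Subadditive u := by
    intro m n
    rcases Nat.eq_zero_or_pos m with hm | hm
    · simp [hu, hm]
    rcases Nat.eq_zero_or_pos n with hn | hn
    · simp [hu, hn]
    have hmn : m + n ≠ 0 := by omega
    simp only [hu, if_neg hmn, if_neg hm.ne', if_neg hn.ne']
    calc Real.log (a (m + n)) ≤ Real.log (a m * a n) :=
          Real.log_le_log (hapos (m + n) (by omega)) (hsub m n hm hn)
      _ = Real.log (a m) + Real.log (a n) :=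
          Real.log_mul (hapos m hm).ne' (hapos n hn).ne'
  have hnonneg : ∀ n : ℕ, 0 ≤ u n / n := by
    intro n
    rcases Nat.eq_zero_or_pos n with hn | hn
    · simp [hu, hn]
    · apply div_nonneg _ (Nat.cast_nonneg n)
      simp only [hu, if_neg hn.ne']
      exact Real.log_nonneg (ha n hn)
  have hbdd : BddBelow (range fun n : ℕ => u n / n) := by
    refine ⟨0, ?_⟩
    rintro x ⟨n, rfl⟩
    exact hnonneg n
  have hset : {x : ℝ | ∃ n : ℕ, 1 ≤ n ∧ x = Real.log (a n) / n} =
      (fun n : ℕ => u n / n) '' Ici 1 := by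
    ext x
    constructor
    · rintro ⟨n, hn, rfl⟩
      refine ⟨n, hn, ?_⟩
      have hn0 : n ≠ 0 := by omega
      simp [hu, hn0]
    · rintro ⟨n, hn, rfl⟩
      have hn1 : 1 ≤ n := hn
      have hn0 : n ≠ 0 := by omega
      exact ⟨n, hn1, by simp [hu, hn0]⟩
  have hlim : h = hsubadd.lim := by rw [hh, Subadditive.lim, hset]
  have htend : Tendsto (fun n => u n / n) atTop (𝓝 h) := by
    rw [hlim]; exact hsubadd.tendsto_lim hbdd
  intro n hn
  have hn0 : (0:ℝ) < (n:ℝ) := by exact_mod_cast hn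
  constructor
  · -- lower bound
    have hle : h ≤ u n / n := hlim ▸ hsubadd.lim_le_div hbdd (by omega)
    have hle' : h ≤ Real.log (a n) / n := by
      have hne : n ≠ 0 := by omega
      simpa [hu, hne] using hle
    have hnh : n * h ≤ Real.log (a n) := by
      rw [le_div_iff₀ hn0] at hle'; linarith
    calc Real.exp (n * h) ≤ Real.exp (Real.log (a n)) := Real.exp_le_exp.mpr hnh
      _ = a n := Real.exp_log (hapos n hn)
  · -- upper bound
    have key : ∀ k : ℕ, c₁ ^ k * a n ^ (k + 1) ≤ a ((k + 1) * n) := by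
      intro k
      induction k with
      | zero => simp
      | succ k IH =>
        show c₁ ^ (k + 1) * a n ^ (k + 2) ≤ a ((k + 2) * n)
        have h1 : c₁ * a n * a ((k + 1) * n) ≤ a ((k + 2) * n) := by
          have hlt : n < (k + 2) * n := by
            have := (Nat.mul_lt_mul_right (Nat.lt_of_lt_of_le one_pos hn)).mpr
              (show 1 < k + 2 by omega)
            simpa using this
          have := hsup ((k + 2) * n) n hn hlt
          have heq : (k + 2) * n = (k + 1) * n + n := by ring
          rwa [heq, Nat.add_sub_cancel, ← heq] at this
        have h2 : c₁ * a n * (c₁ ^ k * a n ^ (k + 1)) ≤ c₁ * a n * a ((k + 1) * n) :=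
          mul_le_mul_of_nonneg_left IH (mul_nonneg hc₁.le (hapos n hn).le)
        calc c₁ ^ (k + 1) * a n ^ (k + 2) = c₁ * a n * (c₁ ^ k * a n ^ (k + 1)) := by ring
          _ ≤ c₁ * a n * a ((k + 1) * n) := h2
          _ ≤ a ((k + 2) * n) := h1
    have hlogc : Real.log c₁ ≤ 0 := Real.log_nonpos hc₁.le hc₁'
    have hdiv : ∀ k : ℕ, (Real.log c₁ + Real.log (a n)) / n ≤
        u ((k + 1) * n) / (((k + 1) * n : ℕ) : ℝ) := by
      intro k
      have hkn : (k + 1) * n ≠ 0 := Nat.mul_ne_zero (by omega) (by omega)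
      have hlog : (k : ℝ) * Real.log c₁ + ((k : ℝ) + 1) * Real.log (a n) ≤
          Real.log (a ((k + 1) * n)) := by
        have hpos : (0:ℝ) < c₁ ^ k * a n ^ (k + 1) :=
          mul_pos (pow_pos hc₁ k) (pow_pos (hapos n hn) _)
        have := Real.log_le_log hpos (key k)
        rwa [Real.log_mul (pow_pos hc₁ k).ne' (pow_pos (hapos n hn) _).ne',
          Real.log_pow, Real.log_pow, Nat.cast_add, Nat.cast_one] at this
      have hstep : ((k : ℝ) + 1) * (Real.log c₁ + Real.log (a n)) ≤
          Real.log (a ((k + 1) * n)) := by nlinarith [hlogc]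
      have hkn' : (0:ℝ) < (((k + 1) * n : ℕ) : ℝ) :=
        by exact_mod_cast Nat.pos_of_ne_zero hkn
      simp only [hu, if_neg hkn]
      rw [div_le_div_iff₀ hn0 hkn']
      push_cast
      nlinarith [hstep, hn0]
    have htend2 : Tendsto (fun k : ℕ => u ((k + 1) * n) / (((k + 1) * n : ℕ) : ℝ)) atTop (𝓝 h) := by
      apply htend.comp
      apply tendsto_atTop_atTop_of_monotone
      · intro i j hij
        exact Nat.mul_le_mul (by omega) le_rfl
      · intro b
        exact ⟨b, le_trans (by omega) (Nat.le_mul_of_pos_right (b + 1)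
          (Nat.lt_of_lt_of_le one_pos hn))⟩
    have hfin : (Real.log c₁ + Real.log (a n)) / n ≤ h := ge_of_tendsto' htend2 hdiv
    have h1 : Real.log c₁ + Real.log (a n) ≤ n * h := by
      rw [div_le_iff₀ hn0] at hfin; linarith
    have h2 : c₁ * a n ≤ Real.exp (n * h) := by
      have heq : c₁ * a n = Real.exp (Real.log c₁ + Real.log (a n)) := by
        rw [Real.exp_add, Real.exp_log hc₁, Real.exp_log (hapos n hn)]
      rw [heq]
      exact Real.exp_le_exp.mpr h1
    have hexp : (0:ℝ) < Real.exp (n * h) := Real.exp_pos _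
    rw [div_mul_eq_mul_div, le_div_iff₀ hc₁]
    nlinarith
end

section
/- Let (X,d) be a metric space, μ a finite Borel measure on X, S ⊆ X a nonempty subset, and let γ > 1 and C > 0 be such that for all ε ∈ (0,1): μ{x ∈ X : dist(x,S) ≤ ε} ≤ C·(log(1/ε))^{-γ}. Then ∫_{{x : dist(x,S) < 1}} log(1/dist(x,S)) dμ(x) < ∞ (where the integrand is interpreted as +∞ when dist(x,S) = 0). -/
/-!
Write `d x = infDist x S`. Putting `ε = exp (-t)` in the hypothesis bounds the measure of
`{t < log (1 / d)} ⊆ {d ≤ exp (-t)}` by `C t^(-γ)`, which is integrable on `(1, ∞)` since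
`γ > 1`; by the layer-cake formula `log (1 / d)` is then integrable. Letting `t → ∞` shows that
`{d = 0}`, where the integrand is `∞`, is a null set.
-/

open MeasureTheory Metric Set Filter

theorem Real.le_exp_neg_of_lt_log_one_div {t y : ℝ} (h : t < Real.log (1 / y)) :
    y ≤ Real.exp (-t) := by
  rcases le_or_gt y 0 with hy | hy
  · exact hy.trans (Real.exp_pos _).le
  · rw [one_div, Real.log_inv, lt_neg] at h
    exact ((Real.log_lt_iff_lt_exp hy).1 h).le

theorem ENNReal.eq_zero_of_forall_le_ofReal_mul_rpow_neg {m : ENNReal} {γ C : ℝ} (hγ : 0 < γ)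
    (h : ∀ t : ℝ, 0 < t → m ≤ ENNReal.ofReal (C * t ^ (-γ))) : m = 0 := by
  have hlim : Tendsto (fun t : ℝ => ENNReal.ofReal (C * t ^ (-γ))) atTop (nhds 0) := by
    simpa using ENNReal.tendsto_ofReal ((tendsto_rpow_neg_atTop hγ).const_mul C)
  exact nonpos_iff_eq_zero.1 <| ge_of_tendsto hlim <| (eventually_gt_atTop 0).mono h

theorem lintegral_ofReal_lt_top_of_meas_lt_le {α : Type*} [MeasurableSpace α] {μ : Measure α}
    [IsFiniteMeasure μ] {f : α → ℝ}
    (hf : AEMeasurable f μ) {g : ℝ → ℝ} (hg : IntegrableOn g (Ioi 1))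
    (h : ∀ t, 1 < t → μ {a | t < f a} ≤ ENNReal.ofReal (g t)) :
    ∫⁻ a, ENNReal.ofReal (f a) ∂μ < ⊤ := by
  set F : ℝ → ENNReal := fun t => μ {a | t < max (f a) 0}
  have hpos : ∫⁻ a, ENNReal.ofReal (f a) ∂μ = ∫⁻ t in Ioi 0, F t := by
    rw [← lintegral_eq_lintegral_meas_lt μ (ae_of_all _ fun a => le_max_right (f a) 0)
      (hf.max aemeasurable_const)]
    simp [ENNReal.ofReal_max]
  have hnear : ∫⁻ t in Ioc 0 1, F t ≤ μ univ := by
    calc ∫⁻ t in Ioc 0 1, F t ≤ ∫⁻ _ in Ioc (0 : ℝ) 1, μ univ :=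
          lintegral_mono fun t => measure_mono (subset_univ _)
      _ = μ univ := by simp
  have htail : ∫⁻ t in Ioi 1, F t ≤ ∫⁻ t in Ioi 1, ENNReal.ofReal (g t) := by
    refine setLIntegral_mono' measurableSet_Ioi fun t ht => le_of_eq_of_le ?_ (h t ht)
    refine congrArg μ (Set.ext fun a => ?_)
    have ht0 : ¬t < 0 := (zero_lt_one.trans (mem_Ioi.1 ht)).not_gt
    simp [ht0]
  rw [hpos, ← Ioc_union_Ioi_eq_Ioi zero_le_one,
    lintegral_union measurableSet_Ioi (Ioc_disjoint_Ioi le_rfl)]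
  exact ENNReal.add_lt_top.2 ⟨hnear.trans_lt (measure_lt_top μ _),
    htail.trans_lt hg.lintegral_lt_top⟩

theorem stmt_6_general (X : Type*) [MetricSpace X] [MeasurableSpace X] [BorelSpace X]
    (μ : Measure X) [IsFiniteMeasure μ] (S : Set X)
    (γ C : ℝ) (hγ : 1 < γ)
    (hμ : ∀ ε : ℝ, 0 < ε → ε < 1 →
      μ {x | infDist x S ≤ ε} ≤ ENNReal.ofReal (C * (Real.log (1 / ε)) ^ (-γ))) :
    (∫⁻ x in {x | infDist x S < 1},
      (if infDist x S = 0 then (⊤ : ENNReal)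
        else ENNReal.ofReal (Real.log (1 / infDist x S))) ∂μ) < ⊤ := by
  have htail : ∀ t : ℝ, 0 < t →
      μ {x | infDist x S ≤ Real.exp (-t)} ≤ ENNReal.ofReal (C * t ^ (-γ)) := fun t ht => by
    simpa [Real.exp_neg] using hμ _ (Real.exp_pos _) (Real.exp_lt_one_iff.2 (neg_lt_zero.2 ht))
  have hnull : μ {x | infDist x S = 0} = 0 :=
    ENNReal.eq_zero_of_forall_le_ofReal_mul_rpow_neg (by linarith) fun t ht =>
      (measure_mono fun x (hx : infDist x S = 0) => hx.trans_le (Real.exp_pos _).le).trans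
        (htail t ht)
  have hae : (fun x => if infDist x S = 0 then ⊤
      else ENNReal.ofReal (Real.log (1 / infDist x S))) =ᵐ[μ]
      fun x => ENNReal.ofReal (Real.log (1 / infDist x S)) := by
    filter_upwards [measure_eq_zero_iff_ae_notMem.1 hnull] with x hx
    exact if_neg hx
  calc _ ≤ _ := setLIntegral_le_lintegral _ _
    _ = ∫⁻ x, ENNReal.ofReal (Real.log (1 / infDist x S)) ∂μ := lintegral_congr_ae hae
    _ < ⊤ := lintegral_ofReal_lt_top_of_meas_lt_le (by fun_prop)
      ((integrableOn_Ioi_rpow_of_lt (by linarith) one_pos).const_mul C) fun t ht =>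
        (measure_mono fun x hx => Real.le_exp_neg_of_lt_log_one_div hx).trans
          (htail t (by linarith))

theorem stmt_6 (X : Type*) [MetricSpace X] [MeasurableSpace X] [BorelSpace X]
    (μ : Measure X) [IsFiniteMeasure μ] (S : Set X) (hS : S.Nonempty)
    (γ C : ℝ) (hγ : 1 < γ) (hC : 0 < C)
    (hμ : ∀ ε : ℝ, 0 < ε → ε < 1 →
      μ {x | infDist x S ≤ ε} ≤ ENNReal.ofReal (C * (Real.log (1 / ε)) ^ (-γ))) :
    (∫⁻ x in {x | infDist x S < 1},
      (if infDist x S = 0 then (⊤ : ENNReal)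
        else ENNReal.ofReal (Real.log (1 / infDist x S))) ∂μ) < ⊤ :=
  stmt_6_general X μ S γ C hγ hμ
end

section
/- Let (B, ‖·‖_B) and (B_w, ‖·‖_w) be normed vector spaces over the reals with B a linear subspace of B_w satisfying ‖f‖_w ≤ ‖f‖_B for all f ∈ B. Suppose that for every ε > 0 there exist finitely many continuous linear functionals ℓ₁, …, ℓ_N on B_w such that ‖f‖_w ≤ max_{1 ≤ i ≤ N} |ℓ_i(f)| + ε·‖f‖_B for all f ∈ B. Then the unit ball of B (with respect to ‖·‖_B) is totally bounded in (B_w, ‖·‖_w). -/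
open Metric Set

theorem stmt_14 (B Bw : Type*) [NormedAddCommGroup B] [NormedSpace ℝ B]
    [NormedAddCommGroup Bw] [NormedSpace ℝ Bw]
    (ι : B →ₗ[ℝ] Bw) (hinj : Function.Injective ι)
    (hle : ∀ f : B, ‖ι f‖ ≤ ‖f‖)
    (happrox : ∀ ε : ℝ, 0 < ε → ∃ (N : ℕ) (ℓ : Fin N → (Bw →L[ℝ] ℝ)),
      ∀ f : B, ‖ι f‖ ≤ (⨆ i : Fin N, |ℓ i (ι f)|) + ε * ‖f‖) :
    TotallyBounded (ι '' {f : B | ‖f‖ ≤ 1}) := by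
  classical
  set S : Set Bw := ι '' {f : B | ‖f‖ ≤ 1} with hS
  rw [Metric.totallyBounded_iff]
  intro ε hε
  have hε8 : (0:ℝ) < ε / 8 := by linarith
  obtain ⟨N, ℓ, hℓ⟩ := happrox (ε / 8) hε8
  set Φ : Bw →L[ℝ] (Fin N → ℝ) := ContinuousLinearMap.pi (fun i => ℓ i) with hΦ
  -- Φ '' S is bounded, hence totally bounded in the finite-dimensional space
  have himg : Φ '' S ⊆ closedBall 0 ‖Φ‖ := by
    rintro _ ⟨x, ⟨f, hf, rfl⟩, rfl⟩
    rw [mem_closedBall, dist_zero_right]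
    calc ‖Φ (ι f)‖ ≤ ‖Φ‖ * ‖ι f‖ := Φ.le_opNorm _
      _ ≤ ‖Φ‖ * 1 := mul_le_mul_of_nonneg_left ((hle f).trans hf) (norm_nonneg _)
      _ = ‖Φ‖ := mul_one _
  have htb : TotallyBounded (Φ '' S) :=
    (isCompact_closedBall (0 : Fin N → ℝ) ‖Φ‖).totallyBounded.subset himg
  obtain ⟨t, htfin, hcov⟩ := Metric.totallyBounded_iff.1 htb (ε / 8) hε8
  -- keep only balls meeting Φ '' S; pick representatives in the unit ball of B
  set t' := {y ∈ t | (Φ '' S ∩ ball y (ε / 8)).Nonempty} with ht'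
  have ht'fin : t'.Finite := htfin.subset (sep_subset _ _)
  have hrep : ∀ y : t', ∃ f : B, ‖f‖ ≤ 1 ∧ Φ (ι f) ∈ ball y.1 (ε / 8) := by
    rintro ⟨y, hyt, ⟨z, ⟨x, ⟨f, hf, rfl⟩, rfl⟩, hzball⟩⟩
    exact ⟨f, hf, hzball⟩
  choose rep hrep1 hrep2 using hrep
  haveI : Finite t' := ht'fin.to_subtype
  refine ⟨Set.range (fun y : t' => ι (rep y)), Set.finite_range _, ?_⟩
  rintro _ ⟨f, hf, rfl⟩
  have hΦf : Φ (ι f) ∈ Φ '' S := ⟨ι f, ⟨f, hf, rfl⟩, rfl⟩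
  obtain ⟨y, hyt, hyb⟩ := Set.mem_iUnion₂.1 (hcov hΦf)
  have hyt' : y ∈ t' := ⟨hyt, ⟨Φ (ι f), hΦf, hyb⟩⟩
  set y' : t' := ⟨y, hyt'⟩ with hy'
  refine Set.mem_iUnion₂.2 ⟨ι (rep y'), ⟨y', rfl⟩, ?_⟩
  rw [mem_ball, dist_eq_norm, ← map_sub]
  have hdist : dist (Φ (ι f)) (Φ (ι (rep y'))) < ε / 4 := by
    calc dist (Φ (ι f)) (Φ (ι (rep y'))) ≤ dist (Φ (ι f)) y + dist y (Φ (ι (rep y'))) :=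
          dist_triangle _ _ _
      _ < ε / 8 + ε / 8 := by
          refine add_lt_add (mem_ball.1 hyb) ?_
          rw [dist_comm]; exact mem_ball.1 (hrep2 y')
      _ = ε / 4 := by ring
  have hsup : (⨆ i : Fin N, |ℓ i (ι (f - rep y'))|) ≤ ε / 4 := by
    refine Real.iSup_le (fun i => ?_) (by linarith)
    have h1 : ℓ i (ι (f - rep y')) = Φ (ι f) i - Φ (ι (rep y')) i := by
      simp [hΦ, map_sub]
    rw [h1, ← Real.dist_eq]
    exact (dist_le_pi_dist (Φ (ι f)) (Φ (ι (rep y'))) i).trans hdist.le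
  have hnorm : ‖f - rep y'‖ ≤ 2 := by
    calc ‖f - rep y'‖ ≤ ‖f‖ + ‖rep y'‖ := norm_sub_le _ _
      _ ≤ 1 + 1 := add_le_add hf (hrep1 y')
      _ = 2 := by norm_num
  calc ‖ι (f - rep y')‖ ≤ (⨆ i : Fin N, |ℓ i (ι (f - rep y'))|) + ε / 8 * ‖f - rep y'‖ :=
        hℓ _
    _ ≤ ε / 4 + ε / 8 * 2 := add_le_add hsup (by nlinarith)
    _ < ε := by linarith
end
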